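/- arXiv:1607.08319 — 3 statements merged into one kernel-verified Lean document; each statement's English description precedes it below -/
import Mathlib

section
/- Assume the angular equidistribution of Gaussian primes: for all 0 ≤ θ₁ < θ₂ ≤ 2π, the count Π(x; θ₁, θ₂) of Gaussian primes ρ with θ₁ ≤ arg ρ ≤ θ₂ and |ρ|² ≤ x satisfies Π(x; θ₁, θ₂) ~ (4(θ₂−θ₁)/(2π))·x/ln x. Then every open annular sector {z ∈ ℂ : ψ₁ < arg z < ψ₂, r < |z| < R} with 0 < r < R and ψ₁ < ψ₂ contains a quotient of two Gaussian primes. -/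
/-!
If `Π(x) ~ c x / log x` counts the Gaussian primes of norm at most `x` in a fixed angular
interval, then `Π(a x) < Π(x)` for large `x` whenever `0 < a < 1`, so the interval contains a prime
of norm in `(a x, x]`. With `a = r / R` and `δ = (ψ₂ - ψ₁) / 4`, pick `π₂` with argument in
`[0, δ]` and norm in `(a y, y]`, and `π₁` with argument in `[ψ₁ + 2δ, ψ₁ + 3δ]` and norm in
`(a r R y, r R y]`. Since `arg π₂ ≤ arg π₁`, the argument of `π₁ / π₂` is `arg π₁ - arg π₂` with no
reduction modulo `2π`, which lies in `(ψ₁, ψ₂)`; and `|π₁ / π₂|²` lies in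
`(a r R, r R / a) = (r², R²)`.
-/

open Filter

/-- The argument of a complex number, taken in `[0, 2π)`. -/
noncomputable def arg2pi (z : ℂ) : ℝ :=
  if 0 ≤ z.arg then z.arg else z.arg + 2 * Real.pi

open Set Real Topology

lemma arg2pi_mem_Ico (z : ℂ) : arg2pi z ∈ Ico 0 (2 * π) := by
  unfold arg2pi
  split_ifs with h
  · exact ⟨h, (Complex.arg_le_pi z).trans_lt (by linarith [pi_pos])⟩
  · constructor <;> linarith [Complex.neg_pi_lt_arg z]

lemma coe_arg2pi (z : ℂ) : (arg2pi z : Angle) = z.arg := by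
  unfold arg2pi
  split_ifs
  · rfl
  · simp

lemma eq_of_coe_angle_eq_of_mem_Ico {x y : ℝ} (hx : x ∈ Ico 0 (2 * π))
    (hy : y ∈ Ico 0 (2 * π)) (h : (x : Angle) = y) : x = y := by
  obtain ⟨k, hk⟩ := Angle.angle_eq_iff_two_pi_dvd_sub.1 h
  calc x = toIcoMod two_pi_pos 0 x := ((toIcoMod_eq_self _).2 (by simpa using hx)).symm
    _ = toIcoMod two_pi_pos 0 y :=
        (toIcoMod_eq_toIcoMod _).2 ⟨-k, by rw [zsmul_eq_mul]; push_cast; linarith⟩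
    _ = y := (toIcoMod_eq_self _).2 (by simpa using hy)

lemma arg2pi_div_of_le {z w : ℂ} (hz : z ≠ 0) (hw : w ≠ 0) (h : arg2pi w ≤ arg2pi z) :
    arg2pi (z / w) = arg2pi z - arg2pi w := by
  obtain ⟨hz₀, hz₁⟩ := arg2pi_mem_Ico z
  obtain ⟨hw₀, hw₁⟩ := arg2pi_mem_Ico w
  refine eq_of_coe_angle_eq_of_mem_Ico (arg2pi_mem_Ico _) ⟨by linarith, by linarith⟩ ?_
  rw [coe_arg2pi, Complex.arg_div_coe_angle hz hw, Angle.coe_sub, coe_arg2pi, coe_arg2pi]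

lemma exists_of_natCard_lt {α : Type*} {p q : α → Prop} (hpq : ∀ x, p x → q x)
    (h : Nat.card {x // p x} < Nat.card {x // q x}) : ∃ x, q x ∧ ¬ p x := by
  by_contra! hqp
  have : p = q := funext fun x => propext ⟨hpq x, hqp x⟩
  simp [this] at h

lemma eventually_lt_of_tendsto_div {F g : ℝ → ℝ} {a : ℝ} (ha₀ : 0 < a) (ha₁ : a < 1)
    (hF : Tendsto (fun x => F x / g x) atTop (𝓝 1))
    (hg : Tendsto (fun x => g (a * x) / g x) atTop (𝓝 a)) (hg₀ : ∀ᶠ x in atTop, 0 < g x) :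
    ∀ᶠ x in atTop, F (a * x) < F x := by
  have hscale : Tendsto (a * ·) atTop atTop := tendsto_id.const_mul_atTop ha₀
  have hFa : Tendsto (fun x => F (a * x) / g x) atTop (𝓝 a) := by
    have := (hF.comp hscale).mul hg
    rw [one_mul] at this
    refine this.congr' ?_
    filter_upwards [hscale.eventually hg₀] with x hx
    exact div_mul_div_cancel₀ hx.ne'
  filter_upwards [hFa.eventually_lt hF ha₁, hg₀] with x hlt hx
  exact (div_lt_div_iff_of_pos_right hx).1 hlt

lemma tendsto_div_log_comp_const_mul {c a : ℝ} (hc : c ≠ 0) (ha : 0 < a) :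
    Tendsto (fun x => c * (a * x / log (a * x)) / (c * (x / log x))) atTop (𝓝 a) := by
  have hlog : Tendsto (fun x => 1 + log a / log x) atTop (𝓝 1) := by
    simpa using tendsto_const_nhds.add (tendsto_const_nhds.div_atTop tendsto_log_atTop)
  have hdiv : Tendsto (fun x => a / (1 + log a / log x)) atTop (𝓝 (a / 1)) :=
    tendsto_const_nhds.div hlog one_ne_zero
  rw [div_one] at hdiv
  refine hdiv.congr' ?_
  filter_upwards [eventually_gt_atTop 1, eventually_gt_atTop a⁻¹] with x hx hax
  have hax : 1 < a * x := by rwa [← inv_mul_lt_iff₀ ha, mul_one]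
  have := log_pos hx
  have := log_pos hax
  rw [log_mul ha.ne' (by linarith), add_comm (log a)] at this ⊢
  field_simp

lemma eventually_exists_mem_Ioc_of_tendsto_natCard {α : Type*} {P : α → Prop} {f : α → ℝ}
    {c a : ℝ} (hc : 0 < c) (ha₀ : 0 < a) (ha₁ : a < 1)
    (h : Tendsto (fun x => (Nat.card {ρ // P ρ ∧ f ρ ≤ x} : ℝ) / (c * (x / log x)))
      atTop (𝓝 1)) :
    ∀ᶠ x in atTop, ∃ ρ, P ρ ∧ a * x < f ρ ∧ f ρ ≤ x := by
  have hg₀ : ∀ᶠ x : ℝ in atTop, 0 < c * (x / log x) := by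
    filter_upwards [eventually_gt_atTop 1] with x hx
    have := log_pos hx
    positivity
  filter_upwards [eventually_lt_of_tendsto_div ha₀ ha₁ h
    (tendsto_div_log_comp_const_mul hc.ne' ha₀) hg₀, eventually_gt_atTop 0] with x hlt hx
  obtain ⟨ρ, ⟨hP, hfx⟩, hnot⟩ := exists_of_natCard_lt (p := fun ρ => P ρ ∧ f ρ ≤ a * x)
    (q := fun ρ => P ρ ∧ f ρ ≤ x)
    (fun ρ hρ => ⟨hρ.1, hρ.2.trans (mul_le_of_le_one_left hx.le ha₁.le)⟩)
    (by exact_mod_cast hlt)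
  exact ⟨ρ, hP, lt_of_not_ge fun h => hnot ⟨hP, h⟩, hfx⟩

lemma div_mem_Ioo_of_mem_Ioc {a t y u v : ℝ} (ha : 0 < a) (ht : 0 < t) (hv₀ : 0 < v)
    (hu : u ∈ Ioc (a * (t * y)) (t * y)) (hv : v ∈ Ioc (a * y) y) :
    u / v ∈ Ioo (a * t) (t / a) := by
  obtain ⟨hu₁, hu₂⟩ := hu
  obtain ⟨hv₁, hv₂⟩ := hv
  rw [mem_Ioo, lt_div_iff₀ hv₀, div_lt_div_iff₀ hv₀ ha]
  constructor <;> nlinarith [mul_pos ha ht]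

/-- Assuming Kubilius' angular equidistribution of Gaussian primes, every open annular
sector contains a quotient of two Gaussian primes. -/
theorem annular_sector_contains_quotient_of_gaussian_primes
    (hKub : ∀ θ₁ θ₂ : ℝ, 0 ≤ θ₁ → θ₁ < θ₂ → θ₂ ≤ 2 * Real.pi →
      Tendsto (fun x : ℝ =>
          (Nat.card {ρ : GaussianInt // Prime ρ ∧
              θ₁ ≤ arg2pi (GaussianInt.toComplex ρ) ∧
              arg2pi (GaussianInt.toComplex ρ) ≤ θ₂ ∧
              ‖GaussianInt.toComplex ρ‖ ^ 2 ≤ x} : ℝ) /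
            (4 * (θ₂ - θ₁) / (2 * Real.pi) * (x / Real.log x)))
        atTop (nhds 1))
    (ψ₁ ψ₂ r R : ℝ) (hψ₁ : 0 ≤ ψ₁) (hψ : ψ₁ < ψ₂) (hψ₂ : ψ₂ ≤ 2 * Real.pi)
    (hr : 0 < r) (hrR : r < R) :
    ∃ π₁ π₂ : GaussianInt, Prime π₁ ∧ Prime π₂ ∧
      ψ₁ < arg2pi (GaussianInt.toComplex π₁ / GaussianInt.toComplex π₂) ∧
      arg2pi (GaussianInt.toComplex π₁ / GaussianInt.toComplex π₂) < ψ₂ ∧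
      r < ‖GaussianInt.toComplex π₁ / GaussianInt.toComplex π₂‖ ∧
      ‖GaussianInt.toComplex π₁ / GaussianInt.toComplex π₂‖ < R := by
  have hR : 0 < R := hr.trans hrR
  have sector : ∀ θ₁ θ₂ : ℝ, 0 ≤ θ₁ → θ₁ < θ₂ → θ₂ ≤ 2 * π → ∀ᶠ x in atTop,
      ∃ ρ : GaussianInt, (Prime ρ ∧ θ₁ ≤ arg2pi ρ ∧ arg2pi ρ ≤ θ₂) ∧
        ‖(ρ : ℂ)‖ ^ 2 ∈ Ioc (r / R * x) x := fun θ₁ θ₂ h₁ h₁₂ h₂ =>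
    eventually_exists_mem_Ioc_of_tendsto_natCard (c := 4 * (θ₂ - θ₁) / (2 * π))
      (div_pos (by linarith) (by positivity))
      (div_pos hr hR) ((div_lt_one hR).2 hrR)
      (by simpa only [and_assoc] using hKub θ₁ θ₂ h₁ h₁₂ h₂)
  obtain ⟨δ, hδ₀, hδ⟩ : ∃ δ, 0 < δ ∧ ψ₁ + 4 * δ = ψ₂ := ⟨(ψ₂ - ψ₁) / 4, by linarith, by ring⟩
  obtain ⟨y, ⟨π₁, ⟨hp₁, harg₁, harg₁'⟩, hn₁⟩, ⟨π₂, ⟨hp₂, harg₂, harg₂'⟩, hn₂⟩⟩ :=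
    (((tendsto_id.const_mul_atTop (mul_pos hr hR)).eventually
      (sector (ψ₁ + 2 * δ) (ψ₁ + 3 * δ) (by positivity) (by linarith) (by linarith))).and
      (sector 0 δ le_rfl (by positivity) (by linarith))).exists
  have hz₁ : (π₁ : ℂ) ≠ 0 := by simpa using hp₁.ne_zero
  have hz₂ : (π₂ : ℂ) ≠ 0 := by simpa using hp₂.ne_zero
  have harg := arg2pi_div_of_le hz₁ hz₂ (by linarith)
  have hnorm := div_mem_Ioo_of_mem_Ioc (div_pos hr hR) (mul_pos hr hR) (by positivity) hn₁ hn₂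
  rw [← div_pow, ← norm_div, show r / R * (r * R) = r ^ 2 by field_simp,
    show r * R / (r / R) = R ^ 2 by field_simp] at hnorm
  refine ⟨π₁, π₂, hp₁, hp₂, by rw [harg]; linarith, by rw [harg]; linarith,
    (pow_lt_pow_iff_left₀ hr.le (norm_nonneg _) two_ne_zero).1 hnorm.1,
    (pow_lt_pow_iff_left₀ (norm_nonneg _) hR.le two_ne_zero).1 hnorm.2⟩
end

section
/- Assume the Dirichlet-type equidistribution theorem for Gaussian primes: for β, γ ∈ ℤ[i] with gcd(β, γ) = 1, the count Π(x; θ₁, θ₂; β, γ) of Gaussian primes ρ ≡ β (mod γ) with θ₁ ≤ arg ρ ≤ θ₂ and |ρ|² ≤ x satisfies Π(x; θ₁, θ₂; β, γ) ~ (4(θ₂−θ₁)/(2π·φ(γ)))·x/ln x. Then for any β₁, γ₁, β₂, γ₂ ∈ ℤ[i] with gcd(β₁, γ₁) = gcd(β₂, γ₂) = 1, the set {π₁/π₂ : π₁ ≡ β₁ (mod γ₁) and π₂ ≡ β₂ (mod γ₂) are Gaussian primes} is dense in ℂ. -/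
open Filter

/-- Euler's phi function on ℤ[i]: the number of invertible residue classes mod γ. -/
noncomputable def gaussianPhi (γ : GaussianInt) : ℕ :=
  Nat.card (GaussianInt ⧸ Ideal.span {γ})ˣ

/-!
A counting function with `N x ~ c x / log x` satisfies `N (μ x) / N x → μ`, so for `μ > 1` it
increases strictly between `x` and `μ x` once `x` is large: each class mod `γ` has primes in every
angular sector and in every annulus `t < |ρ| ≤ μ t` far out. Given `w ≠ 0`, take `π₂` far out in a
thin sector at angle `a`, then `π₁` in the thin sector at angle `a + arg w` with
`|w| |π₂| < |π₁| ≤ μ |w| |π₂|`; for thin sectors and `μ` close to `1`, `π₁ / π₂` is close to `w`.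
-/

open Topology Set Complex
open scoped Real Pointwise

theorem exp_arg2pi_mul_I (z : ℂ) : exp (arg2pi z * I) = exp (arg z * I) := by
  unfold arg2pi
  split_ifs
  · rfl
  · push_cast
    rw [add_mul, exp_add, exp_two_pi_mul_I, mul_one]

theorem norm_mul_exp_arg2pi_mul_I (z : ℂ) : ‖z‖ * exp (arg2pi z * I) = z := by
  rw [exp_arg2pi_mul_I, norm_mul_exp_arg_mul_I]

theorem div_eq_norm_div_mul_exp_arg2pi_sub {z₁ z₂ : ℂ} (h : z₂ ≠ 0) :
    z₁ / z₂ = ((‖z₁‖ / ‖z₂‖ : ℝ) : ℂ) * exp ((arg2pi z₁ - arg2pi z₂ : ℝ) * I) := by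
  have h' : (‖z₂‖ : ℂ) ≠ 0 := ofReal_ne_zero.2 (norm_ne_zero_iff.2 h)
  conv_lhs => rw [← norm_mul_exp_arg2pi_mul_I z₁, ← norm_mul_exp_arg2pi_mul_I z₂]
  push_cast
  rw [sub_mul, exp_sub]
  field_simp

theorem tendsto_comp_mul_div_self_of_tendsto_div_x_div_log {f : ℝ → ℝ} {c : ℝ}
    (hf : Tendsto (fun x => f x / (c * (x / Real.log x))) atTop (𝓝 1)) {μ : ℝ} (hμ : 0 < μ) :
    Tendsto (fun x => f (μ * x) / f x) atTop (𝓝 μ) := by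
  set g : ℝ → ℝ := fun x => c * (x / Real.log x)
  have hμx : Tendsto (μ * ·) atTop atTop := tendsto_id.const_mul_atTop hμ
  replace hf : Tendsto (fun x => f x / g x) atTop (𝓝 1) := hf
  have hne : ∀ᶠ x in atTop, f x / g x ≠ 0 := hf.eventually_ne one_ne_zero
  have hg : Tendsto (fun x => g (μ * x) / g x) atTop (𝓝 μ) := by
    have hlim : Tendsto (fun x => μ / (1 + Real.log μ / Real.log x)) atTop (𝓝 (μ / (1 + 0))) :=
      tendsto_const_nhds.div (tendsto_const_nhds.add
        (tendsto_const_nhds.div_atTop Real.tendsto_log_atTop)) (by norm_num)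
    rw [add_zero, div_one] at hlim
    refine hlim.congr' ?_
    filter_upwards [eventually_gt_atTop 1, hμx.eventually (eventually_gt_atTop 1), hne]
      with x hx hμx' hfg
    have hc : c ≠ 0 := left_ne_zero_of_mul (div_ne_zero_iff.1 hfg).2
    have hlogx := Real.log_pos hx
    have hlogμx := Real.log_pos hμx'
    simp only [g, Real.log_mul hμ.ne' (by positivity : x ≠ 0)] at hlogμx ⊢
    field_simp
    rw [add_comm (Real.log x)]
    exact div_self hlogμx.ne'
  clear_value g
  have hgf : Tendsto (fun x => g x / f x) atTop (𝓝 1) := by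
    simpa using hf.inv₀ one_ne_zero
  have hlim := ((hf.comp hμx).mul hg).mul hgf
  rw [one_mul, mul_one] at hlim
  refine hlim.congr' ?_
  filter_upwards [hne, hμx.eventually hne] with x hx hμx'
  obtain ⟨hfx, hgx⟩ := div_ne_zero_iff.1 hx
  have hgμx := (div_ne_zero_iff.1 hμx').2
  simp only [Function.comp_apply]
  field_simp

theorem eventually_lt_comp_mul_of_tendsto_div_x_div_log {f : ℝ → ℝ} (hf₀ : 0 ≤ f) {c : ℝ}
    (hf : Tendsto (fun x => f x / (c * (x / Real.log x))) atTop (𝓝 1)) {μ : ℝ} (hμ : 1 < μ) :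
    ∀ᶠ x in atTop, f x < f (μ * x) := by
  filter_upwards [(tendsto_comp_mul_div_self_of_tendsto_div_x_div_log hf
      (by positivity)).eventually (lt_mem_nhds hμ), hf.eventually_ne one_ne_zero] with x hlt hne
  have hfx : 0 < f x := (hf₀ x).lt_of_ne' (div_ne_zero_iff.1 hne).1
  exact (one_lt_div hfx).1 hlt

theorem eventually_exists_mem_Ioc_of_tendsto_div_x_div_log {α : Type*} {s : Set α} {N : α → ℝ}
    {c : ℝ}
    (h : Tendsto (fun x => (Nat.card {a // a ∈ s ∧ N a ≤ x} : ℝ) / (c * (x / Real.log x)))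
      atTop (𝓝 1)) {μ : ℝ} (hμ : 1 < μ) :
    ∀ᶠ x in atTop, ∃ a ∈ s, N a ∈ Ioc x (μ * x) := by
  filter_upwards [eventually_lt_comp_mul_of_tendsto_div_x_div_log (fun _ => Nat.cast_nonneg _)
    h hμ, eventually_ge_atTop 0] with x hlt hx
  by_contra! hnone
  have hsame : (fun a => a ∈ s ∧ N a ≤ μ * x) = (fun a => a ∈ s ∧ N a ≤ x) := by
    funext a
    refine propext ⟨fun ⟨ha, hle⟩ => ⟨ha, ?_⟩, fun ⟨ha, hle⟩ => ⟨ha, hle.trans ?_⟩⟩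
    · by_contra! hgt
      exact hnone a ha ⟨hgt, hle⟩
    · exact le_mul_of_one_le_left hx hμ.le
  simp only [hsame, lt_irrefl] at hlt

def HasLargeElementsInSectors (s : Set ℂ) : Prop :=
  ∀ θ₁ θ₂ : ℝ, 0 ≤ θ₁ → θ₁ < θ₂ → θ₂ ≤ 2 * π → ∀ μ > 1,
    ∀ᶠ t in atTop, ∃ z ∈ s, arg2pi z ∈ Icc θ₁ θ₂ ∧ ‖z‖ ∈ Ioc t (μ * t)

theorem exists_norm_div_mem_Ioc {A B : Set ℂ} (hA : HasLargeElementsInSectors A)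
    (hB : HasLargeElementsInSectors B) {θ₁ θ₂ η r μ : ℝ} (hθ₁ : 0 ≤ θ₁) (hθ₁η : θ₁ + η ≤ 2 * π)
    (hθ₂ : 0 ≤ θ₂) (hθ₂η : θ₂ + η ≤ 2 * π) (hη : 0 < η) (hr : 0 < r) (hμ : 1 < μ) :
    ∃ z₁ ∈ A, ∃ z₂ ∈ B, arg2pi z₁ ∈ Icc θ₁ (θ₁ + η) ∧ arg2pi z₂ ∈ Icc θ₂ (θ₂ + η) ∧
      ‖z₁‖ / ‖z₂‖ ∈ Ioc r (μ * r) := by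
  obtain ⟨T, hT⟩ := eventually_atTop.1 (hA θ₁ (θ₁ + η) hθ₁ (by linarith) hθ₁η μ hμ)
  obtain ⟨t, ⟨z₂, hz₂, harg₂, ht, -⟩, hTt⟩ :=
    ((hB θ₂ (θ₂ + η) hθ₂ (by linarith) hθ₂η 2 one_lt_two).and
      (eventually_ge_atTop (max (T / r) 0))).exists
  have hz₂pos : 0 < ‖z₂‖ := ((le_max_right _ _).trans hTt).trans_lt ht
  have hTz₂ : T ≤ r * ‖z₂‖ := by
    have := ((le_max_left _ _).trans hTt).trans ht.le
    rwa [div_le_iff₀ hr, mul_comm] at this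
  obtain ⟨z₁, hz₁, harg₁, hlo, hhi⟩ := hT _ hTz₂
  refine ⟨z₁, hz₁, z₂, hz₂, harg₁, harg₂, ?_, ?_⟩
  · rwa [lt_div_iff₀ hz₂pos]
  · rwa [div_le_iff₀ hz₂pos, mul_assoc]

theorem dense_div_of_hasLargeElementsInSectors {A B : Set ℂ} (hA : HasLargeElementsInSectors A)
    (hB : HasLargeElementsInSectors B) : Dense (A / B) := by
  refine dense_closure.1 ((dense_compl_singleton (0 : ℂ)).mono fun w hw => ?_)
  rw [Metric.mem_closure_iff]
  intro ε hε
  have hpolar : ContinuousAt (fun p : ℝ × ℝ => (p.1 : ℂ) * exp (p.2 * I)) (‖w‖, arg w) := by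
    fun_prop
  obtain ⟨δ, hδ, hclose⟩ := Metric.continuousAt_iff.1 hpolar ε hε
  have hr : 0 < ‖w‖ := norm_pos_iff.2 hw
  set η := min (δ / 2) π
  have hη : 0 < η := lt_min (by positivity) Real.pi_pos
  have hηδ : η ≤ δ / 2 := min_le_left _ _
  have hηπ : η ≤ π := min_le_right _ _
  have harg_lo := neg_pi_lt_arg w
  have harg_hi := arg_le_pi w
  -- both window angles lie in `[0, π]` and differ by `arg w`
  obtain ⟨z₁, hz₁, z₂, hz₂, ⟨h₁, h₁'⟩, ⟨h₂, h₂'⟩, hlo, hhi⟩ :=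
    exists_norm_div_mem_Ioc hA hB (θ₁ := max (arg w) 0) (θ₂ := max (-arg w) 0) (η := η)
      (μ := 1 + δ / (2 * ‖w‖)) (le_max_right _ _) (by grind) (le_max_right _ _) (by grind) hη hr
      (lt_add_of_pos_right 1 (by positivity))
  have hz₂₀ : z₂ ≠ 0 := by
    rintro rfl
    simp only [norm_zero, div_zero] at hlo
    linarith
  have hμr : (1 + δ / (2 * ‖w‖)) * ‖w‖ = ‖w‖ + δ / 2 := by field_simp
  have hangle := max_zero_sub_max_neg_zero_eq_self (arg w)
  have hdist : dist (‖z₁‖ / ‖z₂‖, arg2pi z₁ - arg2pi z₂) (‖w‖, arg w) < δ := by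
    rw [Prod.dist_eq, max_lt_iff, Real.dist_eq, Real.dist_eq, abs_lt, abs_lt]
    refine ⟨⟨?_, ?_⟩, ?_, ?_⟩ <;> linarith
  have hquot := hclose hdist
  dsimp only at hquot
  rw [norm_mul_exp_arg_mul_I, ← div_eq_norm_div_mul_exp_arg2pi_sub hz₂₀] at hquot
  exact ⟨z₁ / z₂, Set.div_mem_div hz₁ hz₂, by rwa [dist_comm]⟩

theorem hasLargeElementsInSectors_image_of_tendsto {α : Type*} {s : Set α} {ι : α → ℂ}
    (hs : ∀ θ₁ θ₂ : ℝ, 0 ≤ θ₁ → θ₁ < θ₂ → θ₂ ≤ 2 * π → ∃ c : ℝ, Tendsto (fun x : ℝ =>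
      (Nat.card {a // a ∈ s ∧ θ₁ ≤ arg2pi (ι a) ∧ arg2pi (ι a) ≤ θ₂ ∧ ‖ι a‖ ^ 2 ≤ x} : ℝ) /
        (c * (x / Real.log x))) atTop (𝓝 1)) :
    HasLargeElementsInSectors (ι '' s) := by
  intro θ₁ θ₂ hθ₁ hθ hθ₂ μ hμ
  obtain ⟨c, hc⟩ := hs θ₁ θ₂ hθ₁ hθ hθ₂
  have hcount := eventually_exists_mem_Ioc_of_tendsto_div_x_div_log
    (s := {a | a ∈ s ∧ θ₁ ≤ arg2pi (ι a) ∧ arg2pi (ι a) ≤ θ₂}) (N := fun a => ‖ι a‖ ^ 2)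
    (by simpa only [mem_ofPred_eq, and_assoc] using hc) (one_lt_pow₀ hμ two_ne_zero)
  filter_upwards [(tendsto_pow_atTop two_ne_zero).eventually hcount, eventually_ge_atTop 0]
    with t ⟨a, ⟨ha, harg₁, harg₂⟩, hlo, hhi⟩ ht
  refine ⟨ι a, mem_image_of_mem ι ha, ⟨harg₁, harg₂⟩,
    lt_of_pow_lt_pow_left₀ 2 (norm_nonneg _) hlo, ?_⟩
  exact le_of_pow_le_pow_left₀ two_ne_zero (by positivity) (by rwa [mul_pow])

/-- Assuming the Dirichlet-type equidistribution theorem for Gaussian primes, the set of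
quotients of Gaussian primes in fixed invertible congruence classes is dense in ℂ. -/
theorem quotients_of_gaussian_primes_in_congruence_classes_dense
    (hKub : ∀ β γ : GaussianInt, IsCoprime β γ →
      ∀ θ₁ θ₂ : ℝ, 0 ≤ θ₁ → θ₁ < θ₂ → θ₂ ≤ 2 * Real.pi →
      Tendsto (fun x : ℝ =>
          (Nat.card {ρ : GaussianInt // Prime ρ ∧ γ ∣ β - ρ ∧
              θ₁ ≤ arg2pi (GaussianInt.toComplex ρ) ∧
              arg2pi (GaussianInt.toComplex ρ) ≤ θ₂ ∧
              ‖GaussianInt.toComplex ρ‖ ^ 2 ≤ x} : ℝ) /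
            (4 * (θ₂ - θ₁) / (2 * Real.pi * (gaussianPhi γ : ℝ)) * (x / Real.log x)))
        atTop (nhds 1))
    (β₁ γ₁ β₂ γ₂ : GaussianInt) (h₁ : IsCoprime β₁ γ₁) (h₂ : IsCoprime β₂ γ₂) :
    Dense {z : ℂ | ∃ π₁ π₂ : GaussianInt, Prime π₁ ∧ Prime π₂ ∧
      γ₁ ∣ β₁ - π₁ ∧ γ₂ ∣ β₂ - π₂ ∧
      z = GaussianInt.toComplex π₁ / GaussianInt.toComplex π₂} := by
  have hclass : ∀ β γ, IsCoprime β γ → HasLargeElementsInSectors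
      (GaussianInt.toComplex '' {ρ | Prime ρ ∧ γ ∣ β - ρ}) := fun β γ hβγ =>
    hasLargeElementsInSectors_image_of_tendsto fun θ₁ θ₂ hθ₁ hθ hθ₂ =>
      ⟨_, by simpa only [mem_ofPred_eq, and_assoc] using hKub β γ hβγ θ₁ θ₂ hθ₁ hθ hθ₂⟩
  refine (dense_div_of_hasLargeElementsInSectors (hclass β₁ γ₁ h₁) (hclass β₂ γ₂ h₂)).mono ?_
  rintro _ ⟨_, ⟨π₁, ⟨hp₁, hd₁⟩, rfl⟩, _, ⟨π₂, ⟨hp₂, hd₂⟩, rfl⟩, rfl⟩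
  exact ⟨π₁, π₂, hp₁, hp₂, hd₁, hd₂, rfl⟩
end

section
/- Let 𝒪 be the ring of integers of a real quadratic field ℚ(√d), d > 1 squarefree, with fundamental unit η > 1, class number h. Assume Rademacher's theorem: for 0 < a < b with 1 < b/a < η², the count Π(x; a, b) of totally positive primes ρ ∈ 𝒪 with N(ρ) ≤ x and a < ρ'/ρ ≤ b satisfies Π(x; a, b) ~ ((ln b − ln a)/(2h ln(η²)))·x/ln x. Then the set of quotients of prime elements of 𝒪 is dense in ℝ. -/
open Filter Set Topology

/-! Since Rademacher's count `Π(x; 1, b)` grows like `x / log x`, eventually `Π(x) < Π(bx)`.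
A prime `ρ` counted in `Π(b²L²)` but not in `Π(bL²)` satisfies `bL² < ρρ' ≤ b²L²` and
`ρ < ρ' ≤ bρ`, hence `L < ρ < bL`. So for every `l > 1` each interval `(L, lL)` with `L` large
contains a prime, and quotients of two such primes approximate every positive real; negating
primes covers the negative reals. -/

lemma lt_and_lt_mul_of_mul_mem_Ioc {r s b L : ℝ} (hr : 0 < r) (hL : 0 ≤ L) (hrs : r < s)
    (hsb : s ≤ b * r) (hlo : b * L ^ 2 < r * s) (hhi : r * s ≤ b * (b * L ^ 2)) :
    L < r ∧ r < b * L := by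
  have hb : 0 < b := by nlinarith
  have hrs' : r * s ≤ b * r ^ 2 := by nlinarith
  constructor
  · exact lt_of_pow_lt_pow_left₀ 2 hr.le (lt_of_mul_lt_mul_left (hlo.trans_le hrs') hb.le)
  · exact lt_of_pow_lt_pow_left₀ 2 (by positivity) (by nlinarith)

lemma eventually_lt_comp_of_tendsto_div {α : Type*} {l : Filter α} {F g : α → ℝ} {φ : α → α}
    {c : ℝ} (hc : 1 < c) (hg : ∀ᶠ x in l, 0 < g x) (hφ : Tendsto φ l l)
    (hF : Tendsto (fun x => F x / g x) l (𝓝 1))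
    (hgφ : Tendsto (fun x => g (φ x) / g x) l (𝓝 c)) :
    ∀ᶠ x in l, F x < F (φ x) := by
  have hFφ : Tendsto (fun x => F (φ x) / g x) l (𝓝 c) := by
    have := (hF.comp hφ).mul hgφ
    rw [one_mul] at this
    refine this.congr' ?_
    filter_upwards [hφ.eventually hg] with x hx
    simp only [Function.comp_apply]
    rw [div_mul_div_cancel₀ hx.ne']
  filter_upwards [hg, hF.eventually_lt hFφ hc] with x hgx hx
  exact (div_lt_div_iff_of_pos_right hgx).mp hx

lemma tendsto_div_log_comp_const_mul_div {K : ℝ} (hK : 0 < K) :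
    Tendsto (fun x => (K * x / Real.log (K * x)) / (x / Real.log x)) atTop (𝓝 K) := by
  have hratio : Tendsto (fun x => K / (Real.log K / Real.log x + 1)) atTop (𝓝 (K / (0 + 1))) :=
    tendsto_const_nhds.div
      ((tendsto_const_nhds.div_atTop Real.tendsto_log_atTop).add tendsto_const_nhds) (by norm_num)
  rw [zero_add, div_one] at hratio
  refine hratio.congr' ?_
  filter_upwards [eventually_gt_atTop 1] with x hx
  have hlx : 0 < Real.log x := Real.log_pos hx
  rw [Real.log_mul hK.ne' (by positivity : x ≠ 0)]
  field_simp

lemma exists_not_of_natCard_lt {α : Type*} {P Q : α → Prop} (hPQ : ∀ a, P a → Q a)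
    (h : Nat.card {a // P a} < Nat.card {a // Q a}) : ∃ a, Q a ∧ ¬ P a := by
  by_contra! hQP
  exact h.ne (Nat.card_congr (Equiv.subtypeEquivRight fun a => ⟨hPQ a, hQP a⟩))

section PrimeSector

variable (O : Subring ℝ) (conj : ℝ → ℝ)

/-- Rademacher's `Π(x; a, b)`. -/
noncomputable def primeSectorCount (a b x : ℝ) : ℕ :=
  Nat.card {ρ : O // Prime ρ ∧ 0 < (ρ : ℝ) ∧ 0 < conj (ρ : ℝ) ∧ (ρ : ℝ) * conj (ρ : ℝ) ≤ x ∧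
    a < conj (ρ : ℝ) / (ρ : ℝ) ∧ conj (ρ : ℝ) / (ρ : ℝ) ≤ b}

variable {O conj}

lemma exists_prime_of_primeSectorCount_lt {a b x y : ℝ} (hxy : x ≤ y)
    (h : primeSectorCount O conj a b x < primeSectorCount O conj a b y) :
    ∃ ρ : O, Prime ρ ∧ 0 < (ρ : ℝ) ∧ x < (ρ : ℝ) * conj (ρ : ℝ) ∧ (ρ : ℝ) * conj (ρ : ℝ) ≤ y ∧
      a < conj (ρ : ℝ) / (ρ : ℝ) ∧ conj (ρ : ℝ) / (ρ : ℝ) ≤ b := by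
  obtain ⟨ρ, ⟨hρ, hpos, hconj, hy, ha, hb⟩, hx⟩ := exists_not_of_natCard_lt
    (fun ρ (hρ : Prime ρ ∧ _) => ⟨hρ.1, hρ.2.1, hρ.2.2.1, hρ.2.2.2.1.trans hxy, hρ.2.2.2.2⟩) h
  exact ⟨ρ, hρ, hpos, not_le.mp fun hx' => hx ⟨hρ, hpos, hconj, hx', ha, hb⟩, hy, ha, hb⟩

lemma eventually_exists_prime_mem_Ioo {b C : ℝ} (hb : 1 < b) (hC : 0 < C)
    (hcount : Tendsto (fun x => (primeSectorCount O conj 1 b x : ℝ) / (C * (x / Real.log x)))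
      atTop (𝓝 1)) :
    ∀ᶠ L in atTop, ∃ ρ : O, Prime ρ ∧ L < (ρ : ℝ) ∧ (ρ : ℝ) < b * L := by
  have hb0 : 0 < b := one_pos.trans hb
  have hgrowth : ∀ᶠ x in atTop,
      primeSectorCount O conj 1 b x < primeSectorCount O conj 1 b (b * x) := by
    have hscale : Tendsto (b * ·) atTop atTop := tendsto_id.const_mul_atTop hb0
    have := eventually_lt_comp_of_tendsto_div hb ?_ hscale hcount ?_
    · simpa only [Nat.cast_lt] using this
    · filter_upwards [eventually_gt_atTop 1] with x hx
      have := Real.log_pos hx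
      positivity
    · refine (tendsto_div_log_comp_const_mul_div hb0).congr' ?_
      filter_upwards with x
      rw [mul_div_mul_left _ _ hC.ne']
  have hsq : Tendsto (fun L : ℝ => b * L ^ 2) atTop atTop :=
    (tendsto_pow_atTop two_ne_zero).const_mul_atTop hb0
  filter_upwards [hsq.eventually hgrowth, eventually_gt_atTop 0] with L hL hL0
  obtain ⟨ρ, hρ, hpos, hlo, hhi, h1, hbρ⟩ :=
    exists_prime_of_primeSectorCount_lt (le_mul_of_one_le_left (by positivity) hb.le) hL
  have hlt : (ρ : ℝ) < conj ρ := by rwa [one_lt_div hpos] at h1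
  have hle : conj ρ ≤ b * ρ := by rwa [div_le_iff₀ hpos] at hbρ
  exact ⟨ρ, hρ, lt_and_lt_mul_of_mul_mem_Ioc hpos hL0.le hlt hle hlo hhi⟩

end PrimeSector

lemma exists_div_mem_Ioo {P : Set ℝ}
    (hP : ∀ l, 1 < l → ∀ᶠ L in atTop, ∃ p ∈ P, L < p ∧ p < l * L)
    {t l : ℝ} (ht : 0 < t) (hl : 1 < l) :
    ∃ p ∈ P, ∃ q ∈ P, t / l < p / q ∧ p / q < l * t := by
  have hscale : Tendsto (t * ·) atTop atTop := tendsto_id.const_mul_atTop ht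
  obtain ⟨L, hL0, ⟨q, hqP, hLq, hql⟩, ⟨p, hpP, htp, hpl⟩⟩ :=
    ((eventually_gt_atTop 0).and ((hP l hl).and (hscale.eventually (hP l hl)))).exists
  have hq : 0 < q := hL0.trans hLq
  refine ⟨p, hpP, q, hqP, ?_, ?_⟩
  · rw [lt_div_iff₀ hq, div_mul_eq_mul_div, div_lt_iff₀ (by positivity)]
    calc t * q < t * (l * L) := by gcongr
      _ = t * L * l := by ring
      _ < p * l := by gcongr
  · rw [div_lt_iff₀ hq]
    calc p < l * (t * L) := hpl
      _ = l * t * L := by ring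
      _ < l * t * q := by gcongr

lemma Ioi_subset_closure_div {P : Set ℝ}
    (hP : ∀ l, 1 < l → ∀ᶠ L in atTop, ∃ p ∈ P, L < p ∧ p < l * L) :
    Ioi 0 ⊆ closure {x | ∃ p ∈ P, ∃ q ∈ P, x = p / q} := by
  intro t (ht : 0 < t)
  rw [Metric.mem_closure_iff]
  intro ε hε
  have hl : 1 < 1 + ε / t := by simp [ht, hε]
  obtain ⟨p, hp, q, hq, hlo, hhi⟩ := exists_div_mem_Ioo hP ht hl
  refine ⟨p / q, ⟨p, hp, q, hq, rfl⟩, ?_⟩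
  have hlt : t - ε < t / (1 + ε / t) := by
    rw [lt_div_iff₀ (by positivity)]; field_simp; nlinarith
  rw [Real.dist_eq, abs_sub_lt_iff]
  constructor
  · linarith
  · field_simp at hhi ⊢; linarith

lemma dense_of_Ioi_subset_closure {S : Set ℝ} (hneg : ∀ x ∈ S, -x ∈ S)
    (hpos : Ioi 0 ⊆ closure S) : Dense S := by
  have hnonneg : Ici 0 ⊆ closure S := by
    simpa only [closure_Ioi, closure_closure] using closure_mono hpos
  intro x
  rcases le_or_gt 0 x with hx | hx
  · exact hnonneg hx
  · have hx' : x ∈ closure (-S) := by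
      rw [← neg_closure, Set.mem_neg]; exact hnonneg (neg_nonneg.mpr hx.le)
    exact closure_mono (fun y (hy : -y ∈ S) => by simpa using hneg _ hy) hx'

theorem quotients_of_primes_real_quadratic_dense_general
    (O : Subring ℝ)
    (conj : ℝ → ℝ)
    (η : Oˣ) (hη : 1 < ((η : O) : ℝ))
    (h : ℕ) (hh : 0 < h)
    (hRad : ∀ a b : ℝ, 0 < a → 1 < b / a → b / a < ((η : O) : ℝ) ^ 2 →
      Tendsto (fun x : ℝ =>
          (Nat.card {ρ : O // Prime ρ ∧ 0 < (ρ : ℝ) ∧ 0 < conj (ρ : ℝ) ∧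
              (ρ : ℝ) * conj (ρ : ℝ) ≤ x ∧
              a < conj (ρ : ℝ) / (ρ : ℝ) ∧ conj (ρ : ℝ) / (ρ : ℝ) ≤ b} : ℝ) /
            ((Real.log b - Real.log a) / (2 * (h : ℝ) * Real.log (((η : O) : ℝ) ^ 2)) *
              (x / Real.log x)))
        atTop (nhds 1)) :
    Dense {q : ℝ | ∃ π₁ π₂ : O, Prime π₁ ∧ Prime π₂ ∧ q = (π₁ : ℝ) / (π₂ : ℝ)} := by
  have hwindow : ∀ l, 1 < l →
      ∀ᶠ L in atTop, ∃ p ∈ {x : ℝ | ∃ ρ : O, Prime ρ ∧ (ρ : ℝ) = x}, L < p ∧ p < l * L := by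
    intro l hl
    set b := min l ((η : O) : ℝ)
    have hb : 1 < b := lt_min hl hη
    have hbη : b < ((η : O) : ℝ) ^ 2 := (min_le_right _ _).trans_lt (by nlinarith)
    have hC : 0 < (Real.log b - Real.log 1) / (2 * (h : ℝ) * Real.log (((η : O) : ℝ) ^ 2)) := by
      have := Real.log_pos hb
      have := Real.log_pos (hb.trans hbη)
      rw [Real.log_one, sub_zero]
      positivity
    filter_upwards [eventually_exists_prime_mem_Ioo hb hC
        (hRad 1 b one_pos (by rwa [div_one]) (by rwa [div_one])), eventually_gt_atTop 0]
      with L ⟨ρ, hρ, hLρ, hρb⟩ hL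
    exact ⟨ρ, ⟨ρ, hρ, rfl⟩, hLρ, hρb.trans_le (by gcongr; exact min_le_left _ _)⟩
  refine dense_of_Ioi_subset_closure ?_ ((Ioi_subset_closure_div hwindow).trans (closure_mono ?_))
  · rintro q ⟨π₁, π₂, h₁, h₂, rfl⟩
    exact ⟨-π₁, π₂, h₁.neg, h₂, by push_cast; ring⟩
  · rintro q ⟨_, ⟨π₁, h₁, rfl⟩, _, ⟨π₂, h₂, rfl⟩, rfl⟩
    exact ⟨π₁, π₂, h₁, h₂, rfl⟩

/-- Assuming Rademacher's prime number theorem for the ring of integers `𝒪` of a real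
quadratic field `ℚ(√d)` (embedded in ℝ), the set of quotients of prime elements of `𝒪`
is dense in ℝ. Here `conj` is the quadratic conjugation `a + b√d ↦ a - b√d`, `η > 1` is a
fundamental unit and `h` is the class number. -/
theorem quotients_of_primes_real_quadratic_dense
    (d : ℤ) (hd : Squarefree d) (hd1 : 1 < d)
    (O : Subring ℝ)
    (hO : ∀ x : ℝ, x ∈ O ↔ IsIntegral ℤ x ∧
      ∃ a b : ℚ, x = (a : ℝ) + (b : ℝ) * Real.sqrt (d : ℝ))
    (conj : ℝ → ℝ)
    (hconj : ∀ a b : ℚ,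
      conj ((a : ℝ) + (b : ℝ) * Real.sqrt (d : ℝ)) = (a : ℝ) - (b : ℝ) * Real.sqrt (d : ℝ))
    (η : Oˣ) (hη : 1 < ((η : O) : ℝ))
    (hfund : ∀ u : Oˣ, 1 < ((u : O) : ℝ) → ((η : O) : ℝ) ≤ ((u : O) : ℝ))
    (h : ℕ) (hh : 0 < h)
    (hRad : ∀ a b : ℝ, 0 < a → 1 < b / a → b / a < ((η : O) : ℝ) ^ 2 →
      Tendsto (fun x : ℝ =>
          (Nat.card {ρ : O // Prime ρ ∧ 0 < (ρ : ℝ) ∧ 0 < conj (ρ : ℝ) ∧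
              (ρ : ℝ) * conj (ρ : ℝ) ≤ x ∧
              a < conj (ρ : ℝ) / (ρ : ℝ) ∧ conj (ρ : ℝ) / (ρ : ℝ) ≤ b} : ℝ) /
            ((Real.log b - Real.log a) / (2 * (h : ℝ) * Real.log (((η : O) : ℝ) ^ 2)) *
              (x / Real.log x)))
        atTop (nhds 1)) :
    Dense {q : ℝ | ∃ π₁ π₂ : O, Prime π₁ ∧ Prime π₂ ∧ q = (π₁ : ℝ) / (π₂ : ℝ)} :=
  quotients_of_primes_real_quadratic_dense_general O conj η hη h hh hRad
end
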